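/- In the category of monoids, the class of Schreier generalized points is pullback stable: if (f : A → B, g : C → A) is a Schreier generalized point and x : X → B is any monoid homomorphism, then the pullback generalized point (π₂ : A ×_B X → X, g×1 : C ×_B X → A ×_B X) is also a Schreier generalized point. -/

import Mathlib

open Function

/-- `a` is a representative of `b` for `f`. -/
def IsRep {A B : Type*} [AddMonoid A] [AddMonoid B] (f : A →+ B) (a : A) (b : B) : Prop :=
  f a = b ∧ ∀ a', f a' = b → ∃! k, f k = 0 ∧ a' = k + a

/-- A (split) Schreier point. -/
def SchreierPoint {E D : Type*} [AddMonoid E] [AddMonoid D] (p : E →+ D) (s : D →+ E) : Prop :=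
  ∀ e, ∃! k, p k = 0 ∧ e = k + s (p e)

/-- A Schreier generalized point. -/
def SchreierGP {A B C : Type*} [AddMonoid A] [AddMonoid B] [AddMonoid C]
    (f : A →+ B) (g : C →+ A) : Prop :=
  Surjective (f.comp g) ∧ ∀ a c, f a = f (g c) → ∃! k, f k = 0 ∧ a = k + g c

/-- The pullback of `f : A →+ B` and `h : C →+ B`, as a submonoid of `A × C`. -/
def pbk {A B C : Type*} [AddMonoid A] [AddMonoid B] [AddMonoid C]
    (f : A →+ B) (h : C →+ B) : AddSubmonoid (A × C) where
  carrier := {p | f p.1 = h p.2}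
  zero_mem' := by simp
  add_mem' := by
    intro p q hp hq
    simp only [Set.mem_setOf_eq, Prod.fst_add, Prod.snd_add, map_add] at *
    rw [hp, hq]

/-- The second projection `A ×_B C →+ C`. -/
def proj2 {A B C : Type*} [AddMonoid A] [AddMonoid B] [AddMonoid C]
    (f : A →+ B) (h : C →+ B) : (pbk f h) →+ C :=
  (AddMonoidHom.snd A C).comp (pbk f h).subtype

/-- The induced morphism `⟨g, 1_C⟩ : C →+ A ×_B C`. -/
def liftg {A B C : Type*} [AddMonoid A] [AddMonoid B] [AddMonoid C]
    (f : A →+ B) (g : C →+ A) : C →+ (pbk f (f.comp g)) :=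
  AddMonoidHom.codRestrict (g.prod (AddMonoidHom.id C)) (pbk f (f.comp g)) (fun _ => rfl)

/-- The induced morphism `g×1 : C ×_B X →+ A ×_B X` between pullbacks. -/
def gtimes1 {A B C X : Type*} [AddMonoid A] [AddMonoid B] [AddMonoid C] [AddMonoid X]
    (f : A →+ B) (g : C →+ A) (x : X →+ B) :
    (pbk (f.comp g) x) →+ (pbk f x) :=
  AddMonoidHom.codRestrict
    ((g.prodMap (AddMonoidHom.id X)).comp (pbk (f.comp g) x).subtype)
    (pbk f x) (fun p => p.2)

/-! The kernel of `π₂ : A ×_B X → X` consists of the pairs `(k, 0)` with `f k = 0`, and over a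
fixed `x'` the equation `(a, x') = (k, 0) + (g c, x')` says exactly `a = k + g c`; so the unique
decomposition for `(f, g)` transfers to the pullback in the first coordinate. -/

section Pullback

variable {A B C X : Type*} [AddMonoid A] [AddMonoid B] [AddMonoid C] [AddMonoid X]

theorem mem_pbk {f : A →+ B} {h : C →+ B} {p : A × C} : p ∈ pbk f h ↔ f p.1 = h p.2 :=
  Iff.rfl

@[simp]
theorem proj2_apply (f : A →+ B) (h : C →+ B) (p : pbk f h) : proj2 f h p = (p : A × C).2 :=
  rfl

@[simp]
theorem coe_gtimes1 (f : A →+ B) (g : C →+ A) (x : X →+ B) (q : pbk (f.comp g) x) :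
    (gtimes1 f g x q : A × X) = (g (q : C × X).1, (q : C × X).2) :=
  rfl

theorem surjective_proj2_comp_gtimes1 {f : A →+ B} {g : C →+ A} (x : X →+ B)
    (hfg : Surjective (f.comp g)) : Surjective ((proj2 f x).comp (gtimes1 f g x)) := by
  intro x'
  obtain ⟨c, hc⟩ := hfg (x x')
  exact ⟨⟨(c, x'), hc⟩, rfl⟩

theorem map_fst_eq_zero_of_proj2_eq_zero {f : A →+ B} {x : X →+ B} {k : pbk f x}
    (hk : proj2 f x k = 0) : f (k : A × X).1 = 0 := by
  rw [mem_pbk.1 k.2, ← proj2_apply, hk, map_zero]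

theorem eq_add_gtimes1_iff {f : A →+ B} {g : C →+ A} {x : X →+ B} {k p : pbk f x}
    {q : pbk (f.comp g) x} (hk : proj2 f x k = 0)
    (hpq : proj2 f x p = proj2 f x (gtimes1 f g x q)) :
    p = k + gtimes1 f g x q ↔ (p : A × X).1 = (k : A × X).1 + g (q : C × X).1 := by
  simp only [proj2_apply, coe_gtimes1] at hk hpq
  simp [Subtype.ext_iff, Prod.ext_iff, hk, hpq]

end Pullback

/-- Schreier generalized points are pullback stable: the pullback
`(π₂ : A ×_B X →+ X, g×1)` of a Schreier generalized point `(f, g)` along any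
homomorphism `x : X →+ B` is again a Schreier generalized point. -/
theorem stmt14 {A B C X : Type*} [AddMonoid A] [AddMonoid B] [AddMonoid C] [AddMonoid X]
    (f : A →+ B) (g : C →+ A) (x : X →+ B) (hgp : SchreierGP f g) :
    SchreierGP (proj2 f x) (gtimes1 f g x) := by
  refine ⟨surjective_proj2_comp_gtimes1 x hgp.1, fun p q hpq => ?_⟩
  have hfp : f (p : A × X).1 = f (g (q : C × X).1) :=
    (mem_pbk.1 p.2).trans ((congrArg x hpq).trans (mem_pbk.1 q.2).symm)
  obtain ⟨k, ⟨hk0, hk⟩, huniq⟩ := hgp.2 _ _ hfp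
  have hkx : proj2 f x ⟨(k, 0), by simp [mem_pbk, hk0]⟩ = 0 := rfl
  refine ⟨_, ⟨hkx, (eq_add_gtimes1_iff hkx hpq).2 hk⟩, fun k' ⟨hk'0, hk'⟩ => ?_⟩
  have hk'k := huniq _ ⟨map_fst_eq_zero_of_proj2_eq_zero hk'0, (eq_add_gtimes1_iff hk'0 hpq).1 hk'⟩
  exact Subtype.ext (Prod.ext hk'k hk'0)
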